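/- arXiv:2602.23897 — 6 statements merged into one kernel-verified Lean document; each statement's English description precedes it below -/
import Mathlib

section
/- Let S be a finite set with |S| = s ≥ 3 and let 𝒜 be a hypercompletely separating system on S, i.e., a family of subsets of S such that for every a ∈ S there exist A, B ∈ 𝒜 with A ∩ B = {a}. Then |𝒜| ≥ ⌈(1 + √(8s+1))/2⌉. -/
/-!
Call `a ∈ S` diagonal if the only pairs `A, B ∈ 𝒜` with `A ∩ B = {a}` have `A = B`; then
`{a} ∈ 𝒜`, and no other element is separated by a pair involving `{a}`. The remaining elements
are separated by pairs of distinct members of `𝒜` avoiding these `k` singletons, and such a pair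
determines the element as its intersection. Hence `s ≤ k + C(n - k, 2) ≤ C(n, 2)` (the last step
needs `s ≥ 3`), which is the bound `n ≥ (1 + √(8s + 1)) / 2`.
-/

open Finset

lemma Nat.add_choose_two_le_choose_two_add {k m : ℕ} (h : 3 ≤ k + m.choose 2) :
    k + m.choose 2 ≤ (k + m).choose 2 := by
  suffices (k : ℚ) + m.choose 2 ≤ (k + m : ℕ).choose 2 by exact_mod_cast this
  push_cast [Nat.cast_choose_two]
  rcases m with _ | m
  · have : (3 : ℚ) ≤ k := by exact_mod_cast (by simpa using h)
    nlinarith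
  · rcases k with _ | k
    · simp
    · push_cast; nlinarith [(Nat.cast_nonneg k : (0:ℚ) ≤ k), (Nat.cast_nonneg m : (0:ℚ) ≤ m)]

lemma ceil_le_of_le_choose_two {s n : ℕ} (hs : 0 < s) (h : s ≤ n.choose 2) :
    ⌈(1 + √(8 * s + 1)) / 2⌉ ≤ (n : ℤ) := by
  have hn : 2 ≤ n := by
    by_contra! hn
    rw [Nat.choose_eq_zero_of_lt hn] at h
    omega
  have hsn : (s : ℝ) ≤ n * (n - 1) / 2 := by
    rw [← Nat.cast_choose_two]; exact_mod_cast h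
  have hn' : (2 : ℝ) ≤ n := by exact_mod_cast hn
  have : √(8 * s + 1) ≤ 2 * n - 1 := Real.sqrt_le_iff.mpr ⟨by linarith, by nlinarith⟩
  rw [Int.ceil_le]
  push_cast
  linarith

section

variable {α : Type*} [DecidableEq α]

def IsHypercompletelySeparating (S : Finset α) (𝒜 : Finset (Finset α)) : Prop :=
  ∀ a ∈ S, ∃ A ∈ 𝒜, ∃ B ∈ 𝒜, A ∩ B = {a}

lemma card_le_choose_two_of_forall_exists_ne_inter_eq {T : Finset α} {𝒜 : Finset (Finset α)}
    (h : ∀ a ∈ T, ∃ A ∈ 𝒜, ∃ B ∈ 𝒜, A ≠ B ∧ A ∩ B = {a}) : #T ≤ (#𝒜).choose 2 := by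
  choose! A hA B hB hne hAB using h
  rw [← card_powersetCard]
  refine card_le_card_of_injOn (fun a => {A a, B a}) (fun a ha => ?_) (fun a ha b hb hab => ?_)
  · simp [mem_powersetCard, insert_subset_iff, hA a ha, hB a ha, card_pair (hne a ha)]
  · have mem_pair : ∀ X ∈ ({A b, B b} : Finset (Finset α)), a ∈ X := by
      have := hAB a ha ▸ mem_singleton_self a
      rw [← show ({A a, B a} : Finset (Finset α)) = {A b, B b} from hab]
      simpa using mem_inter.1 this
    simpa [hAB b hb] using mem_inter.2 ⟨mem_pair (A b) (by simp), mem_pair (B b) (by simp)⟩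

theorem IsHypercompletelySeparating.card_le_choose_two {S : Finset α} {𝒜 : Finset (Finset α)}
    (h𝒜 : IsHypercompletelySeparating S 𝒜) (hS : 3 ≤ #S) : #S ≤ (#𝒜).choose 2 := by
  set D := S.filter fun a => ∀ A ∈ 𝒜, ∀ B ∈ 𝒜, A ∩ B = {a} → A = B
  have singleton_mem : ∀ a ∈ D, {a} ∈ 𝒜 := by
    intro a ha
    obtain ⟨A, hA, B, hB, hAB⟩ := h𝒜 a (mem_filter.1 ha).1
    obtain rfl := (mem_filter.1 ha).2 A hA B hB hAB
    rw [inter_self] at hAB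
    rwa [hAB] at hA
  have separated_off_D : ∀ a ∈ S \ D, ∃ A ∈ 𝒜 \ D.image singleton,
      ∃ B ∈ 𝒜 \ D.image singleton, A ≠ B ∧ A ∩ B = {a} := by
    intro a ha
    obtain ⟨haS, haD⟩ := mem_sdiff.1 ha
    obtain ⟨A, hA, B, hB, hAB, hne⟩ : ∃ A ∈ 𝒜, ∃ B ∈ 𝒜, A ∩ B = {a} ∧ A ≠ B := by
      simpa [D, haS] using haD
    have not_singleton : ∀ X : Finset α, a ∈ X → X ∉ D.image singleton := by
      rintro X haX hX
      obtain ⟨d, hd, rfl⟩ := mem_image.1 hX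
      exact haD (mem_singleton.1 haX ▸ hd)
    have haAB := hAB ▸ mem_singleton_self a
    exact ⟨A, mem_sdiff.2 ⟨hA, not_singleton A (mem_inter.1 haAB).1⟩,
      B, mem_sdiff.2 ⟨hB, not_singleton B (mem_inter.1 haAB).2⟩, hne, hAB⟩
  have hD : #(D.image singleton) = #D := card_image_of_injective _ singleton_injective
  have hD𝒜 : D.image singleton ⊆ 𝒜 := by
    simpa [image_subset_iff] using singleton_mem
  have hoff := card_le_choose_two_of_forall_exists_ne_inter_eq separated_off_D
  rw [card_sdiff_of_subset hD𝒜, hD] at hoff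
  have hkn : #D ≤ #𝒜 := hD ▸ card_le_card hD𝒜
  have hsplit : #(S \ D) + #D = #S := card_sdiff_add_card_eq_card (filter_subset _ S)
  calc #S ≤ #D + (#𝒜 - #D).choose 2 := by omega
    _ ≤ (#D + (#𝒜 - #D)).choose 2 := Nat.add_choose_two_le_choose_two_add (by omega)
    _ = (#𝒜).choose 2 := by rw [Nat.add_sub_cancel' hkn]

end

theorem stmt_6_general {α : Type*} [DecidableEq α] (S : Finset α) (hS : 3 ≤ S.card)
    (𝒜 : Finset (Finset α))
    (hcsp : ∀ a ∈ S, ∃ A ∈ 𝒜, ∃ B ∈ 𝒜, A ∩ B = {a}) :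
    ⌈(1 + Real.sqrt (8 * S.card + 1)) / 2⌉ ≤ (𝒜.card : ℤ) :=
  ceil_le_of_le_choose_two (by omega) (IsHypercompletelySeparating.card_le_choose_two hcsp hS)

theorem stmt_6 {α : Type*} [DecidableEq α] (S : Finset α) (hS : 3 ≤ S.card)
    (𝒜 : Finset (Finset α)) (hsub : ∀ A ∈ 𝒜, A ⊆ S)
    (hcsp : ∀ a ∈ S, ∃ A ∈ 𝒜, ∃ B ∈ 𝒜, A ∩ B = {a}) :
    ⌈(1 + Real.sqrt (8 * S.card + 1)) / 2⌉ ≤ (𝒜.card : ℤ) :=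
  stmt_6_general S hS 𝒜 hcsp
end

section
/- Let k ≥ 3, let S be a finite set with |S| = α(k) = k(k+1)/2, and let 𝒜 be an HCSP-system on S with |𝒜| = k + 1. Then for every a ∈ S there is a unique unordered pair {A, B} of distinct members of 𝒜 with A ∩ B = {a}. -/
/-!
Call `a ∈ S` *split* when some pair of distinct members `A ≠ B` of `𝒜` meets exactly in `{a}`.
The pairs meeting in `{a}` are disjoint for distinct `a`, and there are `C(k+1, 2) = |S|` pairs
in all. An unsplit point `a` can only be separated as `A ∩ A = {a}`, so `{a} ∈ 𝒜`; no pair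
containing such a singleton meets in a split point, so if there are `m` unsplit points then
`|S| ≤ C(k+1-m, 2) + m`, which forces `m = 0` once `k ≥ 3`. Now every point owns at least one of
the `|S|` pairs, hence exactly one.
-/

open Finset

theorem Nat.add_choose_two (a b : ℕ) : (a + b).choose 2 = a.choose 2 + b.choose 2 + a * b := by
  induction b with
  | zero => simp
  | succ b ih =>
    rw [← Nat.add_assoc, Nat.choose_succ_succ', ih, Nat.choose_succ_succ', Nat.choose_one_right,
      Nat.choose_one_right]
    ring

theorem Nat.eq_zero_of_choose_two_le_choose_two_sub_add {n m : ℕ} (hn : 4 ≤ n) (hm : m ≤ n)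
    (h : n.choose 2 ≤ (n - m).choose 2 + m) : m = 0 := by
  obtain ⟨a, rfl⟩ := Nat.exists_eq_add_of_le' hm
  rw [Nat.add_sub_cancel, Nat.add_choose_two] at h
  have two_mul_choose : 2 * m.choose 2 = m * (m - 1) := by
    rw [Nat.choose_two_right, Nat.mul_div_cancel' (Nat.even_mul_pred_self m).two_dvd]
  rcases m with _ | m
  · rfl
  · simp only [Nat.add_sub_cancel] at two_mul_choose
    nlinarith

namespace Finset

variable {α : Type*} [DecidableEq α] (𝒜 : Finset (Finset α))

def pairsMeetingAt (a : α) : Finset (Finset (Finset α)) :=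
  (𝒜.powersetCard 2).filter fun p => ∀ A ∈ p, ∀ B ∈ p, A ≠ B → A ∩ B = {a}

variable {𝒜}

theorem mem_pairsMeetingAt {a : α} {p : Finset (Finset α)} :
    p ∈ pairsMeetingAt 𝒜 a ↔ ∃ A ∈ 𝒜, ∃ B ∈ 𝒜, A ≠ B ∧ A ∩ B = {a} ∧ p = {A, B} := by
  simp only [pairsMeetingAt, mem_filter, mem_powersetCard]
  constructor
  · rintro ⟨⟨hp𝒜, hcard⟩, hmeet⟩
    obtain ⟨A, B, hAB, rfl⟩ := card_eq_two.mp hcard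
    exact ⟨A, hp𝒜 (by simp), B, hp𝒜 (by simp), hAB, hmeet A (by simp) B (by simp) hAB, rfl⟩
  · rintro ⟨A, hA, B, hB, hAB, hmeet, rfl⟩
    refine ⟨⟨by simp [insert_subset_iff, hA, hB], card_pair hAB⟩, ?_⟩
    simp only [mem_insert, mem_singleton]
    rintro C (rfl | rfl) D (rfl | rfl) hCD <;> simp_all [inter_comm]

theorem pair_mem_pairsMeetingAt {a : α} {A B : Finset α} (hA : A ∈ 𝒜) (hB : B ∈ 𝒜)
    (hAB : A ≠ B) (hmeet : A ∩ B = {a}) : {A, B} ∈ pairsMeetingAt 𝒜 a :=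
  mem_pairsMeetingAt.mpr ⟨A, hA, B, hB, hAB, hmeet, rfl⟩

theorem mem_of_mem_of_mem_pairsMeetingAt {a : α} {p : Finset (Finset α)}
    (hp : p ∈ pairsMeetingAt 𝒜 a) {A : Finset α} (hA : A ∈ p) : a ∈ A := by
  obtain ⟨B, -, C, -, -, hmeet, rfl⟩ := mem_pairsMeetingAt.mp hp
  have ha : a ∈ B ∩ C := by simp [hmeet]
  rcases mem_insert.mp hA with rfl | hA
  · exact (mem_inter.mp ha).1
  · exact mem_singleton.mp hA ▸ (mem_inter.mp ha).2

theorem pairwiseDisjoint_pairsMeetingAt (s : Set α) : s.PairwiseDisjoint (pairsMeetingAt 𝒜) := by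
  intro a _ b _ hab
  refine disjoint_left.mpr fun p hpa hpb => hab ?_
  obtain ⟨A, -, B, -, hAB, hmeet, rfl⟩ := mem_pairsMeetingAt.mp hpa
  exact singleton_inj.mp <| hmeet.symm.trans <| (mem_filter.mp hpb).2 A (by simp) B (by simp) hAB

theorem singleton_mem_of_pairsMeetingAt_eq_empty {a : α} {A B : Finset α} (hA : A ∈ 𝒜)
    (hB : B ∈ 𝒜) (hmeet : A ∩ B = {a}) (hempty : pairsMeetingAt 𝒜 a = ∅) : {a} ∈ 𝒜 := by
  obtain rfl : A = B := by
    by_contra hAB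
    simpa [hempty] using pair_mem_pairsMeetingAt hA hB hAB hmeet
  rw [inter_self] at hmeet
  exact hmeet ▸ hA

theorem card_biUnion_pairsMeetingAt_le (S T : Finset α) (hT𝒜 : ∀ b ∈ T, {b} ∈ 𝒜)
    (hT : ∀ b ∈ T, pairsMeetingAt 𝒜 b = ∅) :
    #(S.biUnion (pairsMeetingAt 𝒜)) ≤ (#𝒜 - #T).choose 2 := by
  have hsub : T.image singleton ⊆ 𝒜 := by simpa [image_subset_iff] using hT𝒜
  rw [← card_image_of_injective T singleton_injective, ← card_sdiff_of_subset hsub,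
    ← card_powersetCard]
  refine card_le_card fun p hp => ?_
  obtain ⟨a, -, hpa⟩ := mem_biUnion.mp hp
  obtain ⟨hp𝒜, hcard⟩ := mem_powersetCard.mp (mem_filter.mp hpa).1
  refine mem_powersetCard.mpr ⟨fun A hA => mem_sdiff.mpr ⟨hp𝒜 hA, ?_⟩, hcard⟩
  intro hAT
  obtain ⟨b, hb, rfl⟩ := mem_image.mp hAT
  -- `a ∈ {b}` makes `b = a`, but `b` owns no pair
  obtain rfl := mem_singleton.mp (mem_of_mem_of_mem_pairsMeetingAt hpa hA)
  simp [hT a hb] at hpa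

theorem card_pairsMeetingAt_eq_one {S : Finset α} (hS : #S = (#𝒜).choose 2)
    (hne : ∀ a ∈ S, (pairsMeetingAt 𝒜 a).Nonempty) {a : α} (ha : a ∈ S) :
    #(pairsMeetingAt 𝒜 a) = 1 := by
  have hpos : ∀ a ∈ S, 1 ≤ #(pairsMeetingAt 𝒜 a) := fun a ha => (hne a ha).card_pos
  refine ((sum_eq_sum_iff_of_le hpos).mp (le_antisymm (sum_le_sum hpos) ?_) a ha).symm
  calc ∑ a ∈ S, #(pairsMeetingAt 𝒜 a)
      = #(S.biUnion (pairsMeetingAt 𝒜)) := (card_biUnion (pairwiseDisjoint_pairsMeetingAt _)).symm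
    _ ≤ (#𝒜 - #(∅ : Finset α)).choose 2 := card_biUnion_pairsMeetingAt_le S ∅ (by simp) (by simp)
    _ = ∑ a ∈ S, 1 := by simp [hS]

theorem exists_pair_of_card_pairsMeetingAt_eq_one {a : α} (h : #(pairsMeetingAt 𝒜 a) = 1) :
    ∃ A ∈ 𝒜, ∃ B ∈ 𝒜, A ≠ B ∧ A ∩ B = {a} ∧
      ∀ C ∈ 𝒜, ∀ D ∈ 𝒜, C ≠ D → C ∩ D = {a} → ({C, D} : Finset (Finset α)) = {A, B} := by
  obtain ⟨p, hp⟩ := card_eq_one.mp h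
  obtain ⟨A, hA, B, hB, hAB, hmeet, rfl⟩ := mem_pairsMeetingAt.mp (hp ▸ mem_singleton_self _)
  refine ⟨A, hA, B, hB, hAB, hmeet, fun C hC D hD hCD hCDa => ?_⟩
  simpa [hp] using pair_mem_pairsMeetingAt hC hD hCD hCDa

variable (𝒜) in
def unsplitPoints (S : Finset α) : Finset α :=
  S.filter (pairsMeetingAt 𝒜 · = ∅)

section Separating

variable {S : Finset α} (hsep : ∀ a ∈ S, ∃ A ∈ 𝒜, ∃ B ∈ 𝒜, A ∩ B = {a})
include hsep

theorem singleton_mem_of_mem_unsplitPoints {a : α} (ha : a ∈ unsplitPoints 𝒜 S) : {a} ∈ 𝒜 := by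
  obtain ⟨haS, hempty⟩ := mem_filter.mp ha
  obtain ⟨A, hA, B, hB, hmeet⟩ := hsep a haS
  exact singleton_mem_of_pairsMeetingAt_eq_empty hA hB hmeet hempty

theorem card_unsplitPoints_le : #(unsplitPoints 𝒜 S) ≤ #𝒜 :=
  card_le_card_of_injOn _ (fun _ => singleton_mem_of_mem_unsplitPoints hsep)
    singleton_injective.injOn

theorem card_le_choose_two_sub_card_unsplitPoints_add :
    #S ≤ (#𝒜 - #(unsplitPoints 𝒜 S)).choose 2 + #(unsplitPoints 𝒜 S) :=
  calc #S ≤ #(S.biUnion (pairsMeetingAt 𝒜)) + #(unsplitPoints 𝒜 S) :=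
        card_le_card_biUnion_add_card_fiber (pairwiseDisjoint_pairsMeetingAt _)
    _ ≤ (#𝒜 - #(unsplitPoints 𝒜 S)).choose 2 + #(unsplitPoints 𝒜 S) := by
        grw [card_biUnion_pairsMeetingAt_le S _ (fun _ => singleton_mem_of_mem_unsplitPoints hsep)
          fun _ hb => (mem_filter.mp hb).2]

end Separating

end Finset

theorem stmt_14_general {α : Type*} [DecidableEq α] (k : ℕ) (hk : 3 ≤ k)
    (S : Finset α) (hS : S.card = k * (k + 1) / 2)
    (𝒜 : Finset (Finset α))
    (hcsp : ∀ a ∈ S, ∃ A ∈ 𝒜, ∃ B ∈ 𝒜, A ∩ B = {a})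
    (hcard : 𝒜.card = k + 1) :
    ∀ a ∈ S, ∃ A ∈ 𝒜, ∃ B ∈ 𝒜, A ≠ B ∧ A ∩ B = {a} ∧
      ∀ C ∈ 𝒜, ∀ D ∈ 𝒜, C ≠ D → C ∩ D = {a} →
        ({C, D} : Finset (Finset α)) = {A, B} := by
  have hS : #S = (#𝒜).choose 2 := by
    rw [hS, hcard, Nat.choose_two_right, Nat.add_sub_cancel, Nat.mul_comm]
  have hunsplit : unsplitPoints 𝒜 S = ∅ :=
    card_eq_zero.mp <| Nat.eq_zero_of_choose_two_le_choose_two_sub_add (by omega)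
      (card_unsplitPoints_le hcsp) (hS ▸ card_le_choose_two_sub_card_unsplitPoints_add hcsp)
  have hsplit (a : α) (ha : a ∈ S) : (pairsMeetingAt 𝒜 a).Nonempty :=
    nonempty_iff_ne_empty.mpr fun h => notMem_empty a (hunsplit ▸ mem_filter.mpr ⟨ha, h⟩)
  exact fun a ha =>
    exists_pair_of_card_pairsMeetingAt_eq_one (card_pairsMeetingAt_eq_one hS hsplit ha)

theorem stmt_14 {α : Type*} [DecidableEq α] (k : ℕ) (hk : 3 ≤ k)
    (S : Finset α) (hS : S.card = k * (k + 1) / 2)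
    (𝒜 : Finset (Finset α)) (hsub : ∀ A ∈ 𝒜, A ⊆ S)
    (hcsp : ∀ a ∈ S, ∃ A ∈ 𝒜, ∃ B ∈ 𝒜, A ∩ B = {a})
    (hcard : 𝒜.card = k + 1) :
    ∀ a ∈ S, ∃ A ∈ 𝒜, ∃ B ∈ 𝒜, A ≠ B ∧ A ∩ B = {a} ∧
      ∀ C ∈ 𝒜, ∀ D ∈ 𝒜, C ≠ D → C ∩ D = {a} →
        ({C, D} : Finset (Finset α)) = {A, B} :=
  stmt_14_general k hk S hS 𝒜 hcsp hcard
end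

section
/- Let k ≥ 3, let S be a finite set with |S| = α(k) = k(k+1)/2, and let 𝒜 be an HCSP-system on S with |𝒜| = k + 1. Then |A ∩ B| = 1 for all distinct A, B ∈ 𝒜. -/
/-!
If a point `a` is not itself a member `{a}` of `𝒜`, it is the intersection of two distinct
members of `𝒜` that are not singletons, and distinct points give distinct pairs. With `s`
singleton members this gives `|S| ≤ s + C(|𝒜| - s, 2)`, which for `|𝒜| = k + 1 ≥ 4` is smaller
than `α(k) = C(k + 1, 2)` unless `s = 0`. So every point is the intersection of a pair of members,
and since there are exactly `C(k + 1, 2) = |S|` pairs, every pair of members meets in a point.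
-/

theorem Nat.add_choose_two_lt {m t : ℕ} (ht : 1 ≤ t) (hmt : 4 ≤ m + t) :
    t + m.choose 2 < (m + t).choose 2 := by
  have ht' : (1 : ℚ) ≤ t := by exact_mod_cast ht
  have hmt' : (4 : ℚ) ≤ m + t := by exact_mod_cast hmt
  suffices (t : ℚ) + m * (m - 1) / 2 < (m + t) * (m + t - 1) / 2 by
    rw [← Nat.cast_lt (α := ℚ)]
    push_cast [Nat.cast_choose_two]
    exact this
  nlinarith [mul_le_mul_of_nonneg_left (by linarith : (1 : ℚ) ≤ 2 * m + t - 3)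
    (by linarith : (0 : ℚ) ≤ t)]

namespace Finset

variable {α : Type*} [DecidableEq α] {S : Finset α} {𝒜 : Finset (Finset α)}

theorem inter_eq_inter_of_pair_eq {A B C D : Finset α}
    (h : ({A, B} : Finset (Finset α)) = {C, D}) : A ∩ B = C ∩ D := by
  have hA : A ∈ ({C, D} : Finset (Finset α)) := h ▸ mem_insert_self A {B}
  have hB : B ∈ ({C, D} : Finset (Finset α)) := h ▸ mem_insert_of_mem (mem_singleton_self B)
  have hC : C ∈ ({A, B} : Finset (Finset α)) := h ▸ mem_insert_self C {D}
  have hD : D ∈ ({A, B} : Finset (Finset α)) := h ▸ mem_insert_of_mem (mem_singleton_self D)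
  simp only [mem_insert, mem_singleton] at hA hB hC hD
  rcases hA with rfl | rfl <;> rcases hB with rfl | rfl <;> grind [inter_comm]

theorem eq_singleton_of_inter_eq_singleton {A B : Finset α} {a : α} (hA : A.card = 1)
    (h : A ∩ B = {a}) : A = {a} := by
  obtain ⟨b, rfl⟩ := card_eq_one.1 hA
  have hab : a ∈ ({b} : Finset α) := mem_of_mem_inter_left (h ▸ mem_singleton_self a)
  rw [mem_singleton.1 hab]

theorem exists_injOn_powersetCard_two
    (h : ∀ a ∈ S, ∃ A ∈ 𝒜, ∃ B ∈ 𝒜, A ≠ B ∧ A ∩ B = {a}) :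
    ∃ f : α → Finset (Finset α), Set.MapsTo f S (𝒜.powersetCard 2) ∧ Set.InjOn f S ∧
      ∀ a ∈ S, ∀ A B, f a = {A, B} → A ∩ B = {a} := by
  choose! A hA B hB hAB hinter using h
  have hfinter : ∀ a ∈ S, ∀ C D, {A a, B a} = ({C, D} : Finset (Finset α)) →
      C ∩ D = {a} := fun a ha C D hf =>
    (inter_eq_inter_of_pair_eq hf.symm).trans (hinter a ha)
  refine ⟨fun a => {A a, B a}, fun a ha => ?_, fun a ha b hb hf => ?_, hfinter⟩
  · exact mem_powersetCard.2 ⟨insert_subset (hA a ha) (singleton_subset_iff.2 (hB a ha)),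
      card_pair (hAB a ha)⟩
  · have hsingleton : ({a} : Finset α) = {b} :=
      (hfinter a ha _ _ hf).symm.trans (hinter b hb)
    exact singleton_injective hsingleton

theorem card_le_choose_two_of_forall_exists_inter_eq_singleton
    (h : ∀ a ∈ S, ∃ A ∈ 𝒜, ∃ B ∈ 𝒜, A ≠ B ∧ A ∩ B = {a}) :
    S.card ≤ 𝒜.card.choose 2 := by
  obtain ⟨f, hmaps, hinj, -⟩ := exists_injOn_powersetCard_two h
  simpa using card_le_card_of_injOn f hmaps hinj

theorem card_inter_eq_one_of_card_eq_choose_two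
    (h : ∀ a ∈ S, ∃ A ∈ 𝒜, ∃ B ∈ 𝒜, A ≠ B ∧ A ∩ B = {a}) (hS : S.card = 𝒜.card.choose 2) :
    ∀ A ∈ 𝒜, ∀ B ∈ 𝒜, A ≠ B → (A ∩ B).card = 1 := by
  obtain ⟨f, hmaps, hinj, hinter⟩ := exists_injOn_powersetCard_two h
  intro A hA B hB hAB
  have hsurj := surjOn_of_injOn_of_card_le f hmaps hinj (by rw [card_powersetCard, hS])
  have hpair : ({A, B} : Finset (Finset α)) ∈ 𝒜.powersetCard 2 :=
    mem_powersetCard.2 ⟨insert_subset hA (singleton_subset_iff.2 hB), card_pair hAB⟩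
  obtain ⟨a, ha, hfa⟩ := hsurj hpair
  rw [hinter a ha A B hfa, card_singleton]

theorem exists_inter_eq_singleton_of_singleton_notMem
    (hcsp : ∀ a ∈ S, ∃ A ∈ 𝒜, ∃ B ∈ 𝒜, A ∩ B = {a}) {a : α} (ha : a ∈ S) (hna : {a} ∉ 𝒜) :
    ∃ A ∈ 𝒜.filter (·.card ≠ 1), ∃ B ∈ 𝒜.filter (·.card ≠ 1), A ≠ B ∧ A ∩ B = {a} := by
  obtain ⟨A, hA, B, hB, hAB⟩ := hcsp a ha
  have hA1 : A.card ≠ 1 := fun h => hna (eq_singleton_of_inter_eq_singleton h hAB ▸ hA)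
  have hB1 : B.card ≠ 1 := fun h =>
    hna (eq_singleton_of_inter_eq_singleton h ((inter_comm B A).trans hAB) ▸ hB)
  refine ⟨A, mem_filter.2 ⟨hA, hA1⟩, B, mem_filter.2 ⟨hB, hB1⟩, fun h => ?_, hAB⟩
  rw [← h, inter_self] at hAB
  exact hna (hAB ▸ hA)

theorem card_le_card_filter_card_eq_one_add_choose_two
    (hcsp : ∀ a ∈ S, ∃ A ∈ 𝒜, ∃ B ∈ 𝒜, A ∩ B = {a}) :
    S.card ≤ (𝒜.filter (·.card = 1)).card + (𝒜.filter (·.card ≠ 1)).card.choose 2 := by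
  rw [← card_filter_add_card_filter_not (s := S) (fun a => {a} ∈ 𝒜)]
  gcongr
  · refine card_le_card_of_injOn singleton (fun a ha => ?_) singleton_injective.injOn
    exact mem_filter.2 ⟨(mem_filter.1 ha).2, card_singleton a⟩
  · refine card_le_choose_two_of_forall_exists_inter_eq_singleton fun a ha => ?_
    exact exists_inter_eq_singleton_of_singleton_notMem hcsp (mem_filter.1 ha).1
      (mem_filter.1 ha).2

end Finset

open Finset in
theorem stmt_15_general {α : Type*} [DecidableEq α] (k : ℕ) (hk : 3 ≤ k)
    (S : Finset α) (hS : S.card = k * (k + 1) / 2)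
    (𝒜 : Finset (Finset α))
    (hcsp : ∀ a ∈ S, ∃ A ∈ 𝒜, ∃ B ∈ 𝒜, A ∩ B = {a})
    (hcard : 𝒜.card = k + 1) :
    ∀ A ∈ 𝒜, ∀ B ∈ 𝒜, A ≠ B → (A ∩ B).card = 1 := by
  have hS' : S.card = 𝒜.card.choose 2 := by
    rw [hS, hcard, Nat.choose_two_right, Nat.add_sub_cancel, Nat.mul_comm]
  have hsplit : (𝒜.filter (·.card ≠ 1)).card + (𝒜.filter (·.card = 1)).card = 𝒜.card := by
    rw [add_comm]
    exact card_filter_add_card_filter_not _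
  have hno_singleton : 𝒜.filter (·.card = 1) = ∅ := by
    by_contra hne
    have hlt := Nat.add_choose_two_lt (card_pos.2 (nonempty_iff_ne_empty.2 hne))
      (show 4 ≤ (𝒜.filter (·.card ≠ 1)).card + _ by omega)
    rw [hsplit] at hlt
    have := card_le_card_filter_card_eq_one_add_choose_two hcsp
    omega
  refine card_inter_eq_one_of_card_eq_choose_two (fun a ha => ?_) hS'
  have hna : {a} ∉ 𝒜 := fun h => filter_eq_empty_iff.1 hno_singleton h (card_singleton a)
  obtain ⟨A, hA, B, hB, hAB⟩ := exists_inter_eq_singleton_of_singleton_notMem hcsp ha hna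
  exact ⟨A, (mem_filter.1 hA).1, B, (mem_filter.1 hB).1, hAB⟩

theorem stmt_15 {α : Type*} [DecidableEq α] (k : ℕ) (hk : 3 ≤ k)
    (S : Finset α) (hS : S.card = k * (k + 1) / 2)
    (𝒜 : Finset (Finset α)) (hsub : ∀ A ∈ 𝒜, A ⊆ S)
    (hcsp : ∀ a ∈ S, ∃ A ∈ 𝒜, ∃ B ∈ 𝒜, A ∩ B = {a})
    (hcard : 𝒜.card = k + 1) :
    ∀ A ∈ 𝒜, ∀ B ∈ 𝒜, A ≠ B → (A ∩ B).card = 1 :=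
  stmt_15_general k hk S hS 𝒜 hcsp hcard
end

section
/- Let k ≥ 3, let S be a finite set with |S| = α(k) = k(k+1)/2, and let 𝒜 be an HCSP-system on S with |𝒜| = k + 1. Then |A| = k for every A ∈ 𝒜. -/
/-!
Choosing for each `a ∈ S` a pair `A ∩ B = {a}` injects `S` into the 2-subsets of `𝒜` as soon as
every member has at least two points; and if `m ≥ 1` members have at most one point, then
`|S| ≤ m + C(k + 1 - m, 2) < C(k + 1, 2)`, so none does. As `|S| = C(k + 1, 2)`, the injection is
a bijection: two members meet in exactly one point, which lies in no third member. Hence each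
`A ∈ 𝒜` is the disjoint union of the `k` singletons `A ∩ B`, `B ≠ A`.
-/

open Finset

section

variable {α : Type*}

theorem Finset.eq_singleton_of_mem_of_card_le_one {A : Finset α} {a : α} (ha : a ∈ A)
    (hA : #A ≤ 1) : A = {a} :=
  eq_singleton_iff_unique_mem.2 ⟨ha, fun x hx => card_le_one.1 hA x hx a ha⟩

variable [DecidableEq α]

def IsHCSP (S : Finset α) (𝒜 : Finset (Finset α)) : Prop :=
  ∀ a ∈ S, ∃ A ∈ 𝒜, ∃ B ∈ 𝒜, A ∩ B = {a}

theorem inf_eq_inf_of_pair_eq {β : Type*} [SemilatticeInf β] [DecidableEq β] {a b c d : β}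
    (h : ({a, b} : Finset β) = {c, d}) : a ⊓ b = c ⊓ d := by
  rw [← coe_inj, coe_pair, coe_pair, Set.pair_eq_pair_iff] at h
  rcases h with ⟨rfl, rfl⟩ | ⟨rfl, rfl⟩
  · rfl
  · exact inf_comm _ _

theorem add_choose_two_lt {m n : ℕ} (hm : 1 ≤ m) (hmn : 4 ≤ m + n) :
    m + n.choose 2 < (m + n).choose 2 := by
  have hm' : (1 : ℚ) ≤ m := by exact_mod_cast hm
  have hmn' : (4 : ℚ) ≤ m + n := by exact_mod_cast hmn
  have key : (m : ℚ) + n.choose 2 < (m + n).choose 2 := by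
    rw [Nat.cast_choose_two, Nat.cast_choose_two, Nat.cast_add]
    nlinarith
  exact_mod_cast key

theorem Finset.ne_of_inter_eq_singleton {A B : Finset α} {a : α} (hA : 2 ≤ #A)
    (h : A ∩ B = {a}) : A ≠ B := by
  rintro rfl
  rw [inter_self] at h
  simp [h] at hA

theorem Finset.pair_mem_powersetCard_two {𝒜 : Finset (Finset α)} {A B : Finset α}
    (hA : A ∈ 𝒜) (hB : B ∈ 𝒜) (hAB : A ≠ B) : {A, B} ∈ 𝒜.powersetCard 2 :=
  mem_powersetCard.2 ⟨insert_subset hA (singleton_subset_iff.2 hB), card_pair hAB⟩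

namespace IsHCSP

variable {S : Finset α} {𝒜 : Finset (Finset α)}

theorem card_le_add_choose_two (h : IsHCSP S 𝒜) :
    #S ≤ #{A ∈ 𝒜 | #A ≤ 1} + (#{A ∈ 𝒜 | ¬ #A ≤ 1}).choose 2 := by
  calc #S = #{a ∈ S | {a} ∈ 𝒜} + #{a ∈ S | {a} ∉ 𝒜} := (card_filter_add_card_filter_not _).symm
    _ ≤ _ := add_le_add ?_ ?_
  · exact card_le_card_of_injOn singleton
      (fun a ha => mem_filter.2 ⟨(mem_filter.1 ha).2, (card_singleton a).le⟩)
      singleton_injective.injOn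
  · rw [← card_powersetCard]
    refine card_le_card_of_forall_subsingleton (fun a p => ∃ A B, p = {A, B} ∧ A ∩ B = {a})
      (fun a ha => ?_) ?_
    · obtain ⟨haS, ha1⟩ := mem_filter.1 ha
      obtain ⟨A, hA, B, hB, hAB⟩ := h a haS
      have hmem : a ∈ A ∧ a ∈ B := mem_inter.1 (hAB ▸ mem_singleton_self a)
      have big : ∀ C ∈ 𝒜, a ∈ C → C ∈ {C ∈ 𝒜 | ¬ #C ≤ 1} := fun C hC haC =>
        mem_filter.2 ⟨hC, fun hC1 => ha1 (eq_singleton_of_mem_of_card_le_one haC hC1 ▸ hC)⟩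
      have hA2 : 2 ≤ #A := not_le.1 (mem_filter.1 (big A hA hmem.1)).2
      exact ⟨{A, B}, pair_mem_powersetCard_two (big A hA hmem.1) (big B hB hmem.2)
        (ne_of_inter_eq_singleton hA2 hAB), A, B, rfl, hAB⟩
    · rintro p - a ⟨-, A, B, rfl, hab⟩ b ⟨-, C, D, hp, hcd⟩
      exact singleton_injective (hab.symm.trans ((inf_eq_inf_of_pair_eq hp).trans hcd))

theorem two_le_card (h : IsHCSP S 𝒜) (hS : (#𝒜).choose 2 ≤ #S) (h𝒜 : 4 ≤ #𝒜) :
    ∀ A ∈ 𝒜, 2 ≤ #A := by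
  by_contra! ⟨A, hA, hA1⟩
  have hsmall : 1 ≤ #{A ∈ 𝒜 | #A ≤ 1} := card_pos.2 ⟨A, mem_filter.2 ⟨hA, by omega⟩⟩
  have hsplit := card_filter_add_card_filter_not (s := 𝒜) (fun A => #A ≤ 1)
  have hlt := add_choose_two_lt hsmall (hsplit ▸ h𝒜)
  rw [hsplit] at hlt
  have := h.card_le_add_choose_two
  omega

theorem exists_inter_eq_singleton_iff (h : IsHCSP S 𝒜) (h2 : ∀ A ∈ 𝒜, 2 ≤ #A)
    (hS : (#𝒜).choose 2 ≤ #S) {A B : Finset α} (hA : A ∈ 𝒜) (hB : B ∈ 𝒜) (hAB : A ≠ B) :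
    ∃ a ∈ S, ∀ C ∈ 𝒜, ∀ D ∈ 𝒜, C ∩ D = {a} ↔ ({C, D} : Finset (Finset α)) = {A, B} := by
  choose! E hE F hF hEF using h
  set pair : α → Finset (Finset α) := fun a => {E a, F a}
  have hmaps : Set.MapsTo pair S (𝒜.powersetCard 2) := fun a ha =>
    pair_mem_powersetCard_two (hE a ha) (hF a ha)
      (ne_of_inter_eq_singleton (h2 _ (hE a ha)) (hEF a ha))
  have hinj : Set.InjOn pair S := fun a ha b hb hab =>
    singleton_injective <| (hEF a ha).symm.trans <| (inf_eq_inf_of_pair_eq hab).trans (hEF b hb)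
  have hsurj := surjOn_of_injOn_of_card_le pair hmaps hinj (by rwa [card_powersetCard])
  obtain ⟨a, ha, hpair⟩ := hsurj (pair_mem_powersetCard_two hA hB hAB)
  refine ⟨a, ha, fun C hC D hD => ⟨fun hCD => ?_, fun hCD => ?_⟩⟩
  · obtain ⟨b, hb, hpairb⟩ :=
      hsurj (pair_mem_powersetCard_two hC hD (ne_of_inter_eq_singleton (h2 C hC) hCD))
    have hba : b = a := singleton_injective <|
      (hEF b hb).symm.trans <| (inf_eq_inf_of_pair_eq hpairb).trans hCD
    rw [← hpairb, hba, hpair]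
  · rw [← hEF a ha]
    exact inf_eq_inf_of_pair_eq (hCD.trans hpair.symm)

theorem exists_mem_ne (h : IsHCSP S 𝒜) (h2 : ∀ A ∈ 𝒜, 2 ≤ #A) {a : α} (ha : a ∈ S)
    (A : Finset α) : ∃ B ∈ 𝒜, B ≠ A ∧ a ∈ B := by
  obtain ⟨C, hC, D, hD, hCD⟩ := h a ha
  have hmem : a ∈ C ∧ a ∈ D := mem_inter.1 (hCD ▸ mem_singleton_self a)
  by_cases hCA : C = A
  · exact ⟨D, hD, fun hDA => ne_of_inter_eq_singleton (h2 C hC) hCD (hCA.trans hDA.symm),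
      hmem.2⟩
  · exact ⟨C, hC, hCA, hmem.1⟩

theorem card_eq_card_sub_one (h : IsHCSP S 𝒜) (hsub : ∀ A ∈ 𝒜, A ⊆ S)
    (h2 : ∀ A ∈ 𝒜, 2 ≤ #A) (hS : (#𝒜).choose 2 ≤ #S) {A : Finset α} (hA : A ∈ 𝒜) :
    #A = #𝒜 - 1 := by
  have hpoint : ∀ B ∈ 𝒜.erase A, ∃ a ∈ S, ∀ C ∈ 𝒜, ∀ D ∈ 𝒜,
      C ∩ D = {a} ↔ ({C, D} : Finset (Finset α)) = {A, B} := fun B hB =>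
    h.exists_inter_eq_singleton_iff h2 hS hA (mem_of_mem_erase hB) (ne_of_mem_erase hB).symm
  have hcover : (𝒜.erase A).biUnion (A ∩ ·) = A := by
    refine (biUnion_subset.2 fun B _ => inter_subset_left).antisymm fun a ha => ?_
    obtain ⟨B, hB, hBA, haB⟩ := h.exists_mem_ne h2 (hsub A hA ha) A
    exact mem_biUnion.2 ⟨B, mem_erase.2 ⟨hBA, hB⟩, mem_inter.2 ⟨ha, haB⟩⟩
  have hdisj : (𝒜.erase A : Set (Finset α)).PairwiseDisjoint (A ∩ ·) := by
    intro B hB C hC hBC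
    obtain ⟨hBA, hB𝒜⟩ := mem_erase.1 hB
    obtain ⟨hCA, hC𝒜⟩ := mem_erase.1 hC
    obtain ⟨b, -, hb⟩ := hpoint B hB
    obtain ⟨c, -, hc⟩ := hpoint C hC
    show Disjoint (A ∩ B) (A ∩ C)
    rw [(hb A hA B hB𝒜).2 rfl, (hc A hA C hC𝒜).2 rfl, disjoint_singleton]
    -- `A ∩ C = {b}` would make `{A, C}` a second pair of members meeting exactly in `b`.
    rintro rfl
    have hpair := (hb A hA C hC𝒜).1 ((hc A hA C hC𝒜).2 rfl)
    have hCmem : C ∈ ({A, B} : Finset (Finset α)) :=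
      hpair ▸ mem_insert_of_mem (mem_singleton_self C)
    rw [mem_insert, mem_singleton] at hCmem
    exact hCmem.elim hCA fun hCB => hBC hCB.symm
  calc #A = #((𝒜.erase A).biUnion (A ∩ ·)) := by rw [hcover]
    _ = ∑ B ∈ 𝒜.erase A, 1 := by
      rw [card_biUnion hdisj]
      refine sum_congr rfl fun B hB => ?_
      obtain ⟨a, -, ha⟩ := hpoint B hB
      rw [(ha A hA B (mem_of_mem_erase hB)).2 rfl, card_singleton]
    _ = #𝒜 - 1 := by rw [sum_const, card_erase_of_mem hA, smul_eq_mul, mul_one]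

end IsHCSP

end

theorem stmt_16 {α : Type*} [DecidableEq α] (k : ℕ) (hk : 3 ≤ k)
    (S : Finset α) (hS : S.card = k * (k + 1) / 2)
    (𝒜 : Finset (Finset α)) (hsub : ∀ A ∈ 𝒜, A ⊆ S)
    (hcsp : ∀ a ∈ S, ∃ A ∈ 𝒜, ∃ B ∈ 𝒜, A ∩ B = {a})
    (hcard : 𝒜.card = k + 1) :
    ∀ A ∈ 𝒜, A.card = k := by
  have h : IsHCSP S 𝒜 := hcsp
  have hpairs : (#𝒜).choose 2 ≤ #S := by
    rw [hcard, Nat.choose_two_right, hS, Nat.add_sub_cancel, mul_comm]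
  have h2 := h.two_le_card hpairs (by omega)
  intro A hA
  rw [h.card_eq_card_sub_one hsub h2 hpairs hA, hcard, Nat.add_sub_cancel]
end

section
/- Let S be a finite set with |S| = s ≥ 3. Then there exists an HCSP-system 𝒜 on S with |𝒜| = ⌈(1 + √(8s+1))/2⌉; consequently, an HCSP-system on S is size-minimal if and only if it has exactly ⌈(1 + √(8s+1))/2⌉ members. -/
/-!
If `A ∩ B = {a}`, then either `A = B = {a}` or `{A, B}` is a pair of distinct members of size
`≠ 1`, and the pair determines `a`. Hence a separating family with `k` singletons and `j` other
members covers at most `k + C(j, 2) ≤ C(k + j, 2)` points (for `s ≥ 3`), so it has at least `m`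
members, where `m` is the least number with `s ≤ C(m, 2)`; solving the quadratic, `m` is
`⌈(1 + √(8s + 1)) / 2⌉`. Conversely, embed `S` into the 2-subsets of `{0, …, m - 1}` and let the
`i`-th set consist of the points whose pair contains `i`. This gives a separating family with at
most `m` members, hence with exactly `m` by the lower bound.
-/

open Finset

namespace Nat

theorem add_choose_two_le {k j : ℕ} (hj : 0 < j) : k + j.choose 2 ≤ (k + j).choose 2 := by
  induction k with
  | zero => simp
  | succ k ih =>
    have pascal : (k + j + 1).choose 2 = (k + j).choose 1 + (k + j).choose 2 :=
      Nat.choose_succ_succ' (k + j) 1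
    rw [show k + 1 + j = k + j + 1 by omega, pascal, Nat.choose_one_right]
    omega

theorem le_choose_two_self {k : ℕ} (hk : 3 ≤ k) : k ≤ k.choose 2 := by
  have := add_choose_two_le (k := k - 3) (j := 3) (by norm_num)
  rwa [show Nat.choose 3 2 = 3 by rfl, Nat.sub_add_cancel hk] at this

theorem le_choose_two_add {s k j : ℕ} (hs : 3 ≤ s) (h : s ≤ k + j.choose 2) :
    s ≤ (k + j).choose 2 := by
  rcases Nat.eq_zero_or_pos j with rfl | hj
  · simp only [add_zero, Nat.choose_zero_succ] at h ⊢
    exact h.trans (le_choose_two_self (hs.trans h))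
  · exact h.trans (add_choose_two_le hj)

end Nat

theorem ceil_le_iff_le_choose_two {s m : ℕ} (hs : 0 < s) :
    ⌈(1 + √(8 * s + 1)) / 2⌉ ≤ (m : ℤ) ↔ s ≤ m.choose 2 := by
  rw [Int.ceil_le, ← Nat.cast_le (α := ℝ), Nat.cast_choose_two, Int.cast_natCast]
  calc (1 + √(8 * s + 1)) / 2 ≤ m ↔ √(8 * s + 1) ≤ 2 * m - 1 := by
        constructor <;> intro <;> linarith
    _ ↔ 0 ≤ 2 * (m : ℝ) - 1 ∧ 8 * (s : ℝ) + 1 ≤ (2 * m - 1) ^ 2 := Real.sqrt_le_iff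
    _ ↔ (s : ℝ) ≤ m * (m - 1) / 2 := by
      have hs' : (1 : ℝ) ≤ s := by exact_mod_cast hs
      constructor
      · rintro ⟨-, h⟩; nlinarith
      · intro h
        have hm : (1 : ℝ) ≤ m := by
          by_contra! hm
          nlinarith [(Nat.cast_nonneg m : (0 : ℝ) ≤ m)]
        constructor <;> nlinarith

section

variable {α : Type*} [DecidableEq α]

def HypercompletelySeparates (𝒜 : Finset (Finset α)) (S : Finset α) : Prop :=
  ∀ a ∈ S, ∃ A ∈ 𝒜, ∃ B ∈ 𝒜, A ∩ B = {a}

theorem card_filter_singleton_mem_le (S : Finset α) (ℬ : Finset (Finset α)) :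
    #{a ∈ S | {a} ∈ ℬ} ≤ #{B ∈ ℬ | #B = 1} :=
  card_le_card_of_injOn (fun a => {a}) (fun a ha => by simp_all)
    (fun _ _ _ _ h => singleton_injective h)

theorem card_filter_singleton_notMem_le {S : Finset α} {ℬ : Finset (Finset α)}
    (h : HypercompletelySeparates ℬ S) :
    #{a ∈ S | {a} ∉ ℬ} ≤ (#{B ∈ ℬ | #B ≠ 1}).choose 2 := by
  -- the intersection is taken in `Set α`, which (unlike `Finset α`) has a top element
  have hpair : ∀ a ∈ {a ∈ S | {a} ∉ ℬ},
      ∃ p ∈ powersetCard 2 {B ∈ ℬ | #B ≠ 1}, p.inf (fun C => (C : Set α)) = {a} := by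
    intro a ha
    rw [mem_filter] at ha
    obtain ⟨A, hA, B, hB, hAB⟩ := h a ha.1
    have hmem : a ∈ A ∧ a ∈ B := mem_inter.1 (hAB ▸ mem_singleton_self a)
    have hbig : ∀ C ∈ ℬ, a ∈ C → #C ≠ 1 := by
      rintro C hC haC hC1
      obtain ⟨x, rfl⟩ := card_eq_one.1 hC1
      rw [mem_singleton.1 haC] at ha
      exact ha.2 hC
    have hne : A ≠ B := by
      rintro rfl
      rw [inter_self] at hAB
      exact ha.2 (hAB ▸ hA)
    refine ⟨{A, B}, mem_powersetCard.2 ⟨?_, card_pair hne⟩, ?_⟩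
    · simp [insert_subset_iff, hA, hB, hbig A hA hmem.1, hbig B hB hmem.2]
    · simpa [← coe_inter] using congrArg ((↑) : Finset α → Set α) hAB
  choose! p hp hpa using hpair
  calc #{a ∈ S | {a} ∉ ℬ} ≤ #(powersetCard 2 {B ∈ ℬ | #B ≠ 1}) :=
        card_le_card_of_injOn p hp fun a ha b hb hab =>
          Set.singleton_injective (by rw [← hpa a ha, ← hpa b hb, hab])
    _ = _ := card_powersetCard _ _

theorem exists_separates_card_le (S : Finset α) {m : ℕ} (h : #S ≤ m.choose 2) :
    ∃ 𝒜 : Finset (Finset α), (∀ A ∈ 𝒜, A ⊆ S) ∧ HypercompletelySeparates 𝒜 S ∧ #𝒜 ≤ m := by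
  have hle : (S : Set α).encard ≤ (powersetCard 2 (range m) : Set (Finset ℕ)).encard := by
    simpa [Set.encard_coe_eq_coe_finsetCard] using h
  obtain ⟨f, hmaps, hinj⟩ := S.finite_toSet.exists_injOn_of_encard_le hle
  have hf : ∀ a ∈ S, f a ∈ powersetCard 2 (range m) := fun a ha => hmaps ha
  refine ⟨(range m).image fun i => {a ∈ S | i ∈ f a}, ?_, ?_,
    card_image_le.trans (card_range m).le⟩
  · simp [filter_subset]
  · intro a ha
    obtain ⟨hfa, hcard⟩ := mem_powersetCard.1 (hf a ha)
    obtain ⟨i, j, hij, hfa_eq⟩ := card_eq_two.1 hcard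
    have hi : i ∈ range m := hfa (by simp [hfa_eq])
    have hj : j ∈ range m := hfa (by simp [hfa_eq])
    refine ⟨_, mem_image_of_mem _ hi, _, mem_image_of_mem _ hj, ?_⟩
    ext b
    simp only [mem_inter, mem_filter, mem_singleton]
    constructor
    · rintro ⟨⟨hb, hib⟩, -, hjb⟩
      refine hinj hb ha (eq_of_subset_of_card_le ?_ ?_).symm
      · simp [hfa_eq, insert_subset_iff, hib, hjb]
      · rw [(mem_powersetCard.1 (hf b hb)).2, hcard]
    · rintro rfl
      simp [ha, hfa_eq]

theorem le_choose_two_card_of_separates {S : Finset α} {ℬ : Finset (Finset α)} (hS : 3 ≤ #S)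
    (h : HypercompletelySeparates ℬ S) : #S ≤ (#ℬ).choose 2 := by
  rw [← card_filter_add_card_filter_not (fun B => #B = 1)]
  refine Nat.le_choose_two_add hS ?_
  rw [← card_filter_add_card_filter_not (s := S) (fun a => {a} ∈ ℬ)]
  exact add_le_add (card_filter_singleton_mem_le S ℬ) (card_filter_singleton_notMem_le h)

end

theorem stmt_18 {α : Type*} [DecidableEq α] (S : Finset α) (hS : 3 ≤ S.card) :
    (∃ 𝒜 : Finset (Finset α), (∀ A ∈ 𝒜, A ⊆ S) ∧
        (∀ a ∈ S, ∃ A ∈ 𝒜, ∃ B ∈ 𝒜, A ∩ B = {a}) ∧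
        (𝒜.card : ℤ) = ⌈(1 + Real.sqrt (8 * S.card + 1)) / 2⌉) ∧
    (∀ ℬ : Finset (Finset α), (∀ B ∈ ℬ, B ⊆ S) →
        (∀ a ∈ S, ∃ A ∈ ℬ, ∃ B ∈ ℬ, A ∩ B = {a}) →
        ((∀ 𝒞 : Finset (Finset α), (∀ C ∈ 𝒞, C ⊆ S) →
            (∀ a ∈ S, ∃ A ∈ 𝒞, ∃ B ∈ 𝒞, A ∩ B = {a}) → ℬ.card ≤ 𝒞.card) ↔
          (ℬ.card : ℤ) = ⌈(1 + Real.sqrt (8 * S.card + 1)) / 2⌉)) := by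
  set c := ⌈(1 + Real.sqrt (8 * S.card + 1)) / 2⌉
  have hceil_le {m : ℕ} : c ≤ m ↔ #S ≤ m.choose 2 := ceil_le_iff_le_choose_two (by omega)
  have hlower (ℬ : Finset (Finset α)) (h : HypercompletelySeparates ℬ S) : c ≤ #ℬ :=
    hceil_le.2 (le_choose_two_card_of_separates hS h)
  have hc : (c.toNat : ℤ) = c := Int.toNat_of_nonneg (by positivity)
  obtain ⟨𝒜, hsub, hsep, hcard⟩ := exists_separates_card_le S (hceil_le.1 hc.ge)
  have h𝒜 : (#𝒜 : ℤ) = c := le_antisymm (hc ▸ Nat.cast_le.2 hcard) (hlower 𝒜 hsep)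
  refine ⟨⟨𝒜, hsub, hsep, h𝒜⟩, fun ℬ _ hℬ => ⟨fun hmin => ?_, fun hℬc 𝒞 _ h𝒞 => ?_⟩⟩
  · exact le_antisymm (h𝒜 ▸ Nat.cast_le.2 (hmin 𝒜 hsub hsep)) (hlower ℬ hℬ)
  · exact_mod_cast hℬc ▸ hlower 𝒞 h𝒞
end

section
/- Let k ≥ 3 and let S be a finite set with |S| = α(k) = k(k+1)/2. Then any two size-minimal HCSP-systems on S are isomorphic, i.e., there is a bijection φ: S → S with ℬ = {φ(A) : A ∈ 𝒜} for any two size-minimal HCSP-systems 𝒜, ℬ on S. -/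
/-
A minimal HCSP-system on `k(k+1)/2` points is the complete graph `K_{k+1}`: its members are the
vertices, its points are the edges, and a point lies in exactly the two members it joins. The
complete-graph construction gives a system with `k + 1` members. Conversely, a point `a` with
`{a}` not a member is the intersection of two distinct non-singleton members, and that pair
determines `a`, so `|S| ≤ s + C(t, 2)` for `s` singleton and `t` non-singleton members; with
`s + t ≤ k + 1` and `k ≥ 3` this forces `s = 0`, `t = k + 1`, and makes `a ↦ {members containing a}`
a bijection from `S` onto the 2-subsets of the system. Any bijection between two such systems
therefore transports to a permutation of `S`.
-/

open Finset

theorem two_mul_choose_two (n : ℕ) : 2 * n.choose 2 = n * (n - 1) := by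
  rw [Nat.choose_two_right, Nat.mul_div_cancel' (Nat.even_mul_pred_self n).two_dvd]

theorem eq_zero_and_eq_of_choose_two_le {s t k : ℕ} (hk : 3 ≤ k) (hst : s + t ≤ k + 1)
    (h : (k + 1).choose 2 ≤ s + t.choose 2) : s = 0 ∧ t = k + 1 := by
  have hk2 := two_mul_choose_two (k + 1)
  have ht2 := two_mul_choose_two t
  rw [Nat.add_sub_cancel] at hk2
  rcases t with _ | t
  · rw [Nat.choose_zero_succ] at h
    nlinarith
  · rw [Nat.add_sub_cancel] at ht2
    have : t + 1 = k + 1 := by nlinarith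
    omega

theorem Set.BijOn.exists_perm_eqOn {α : Type*} {s : Set α} {f : α → α}
    (hf : Set.BijOn f s s) : ∃ σ : Equiv.Perm α, Set.EqOn σ f s := by
  classical
  exact ⟨Equiv.Perm.ofSubtype (hf.equiv f), fun a ha => Equiv.Perm.ofSubtype_apply_of_mem _ ha⟩

theorem Set.BijOn.image_powersetCard {β γ : Type*} [DecidableEq γ] {g : β → γ} {s : Finset β}
    {t : Finset γ} (hg : Set.BijOn g s t) (n : ℕ) :
    Set.BijOn (Finset.image g) (s.powersetCard n) (t.powersetCard n) := by
  have hmaps : Set.MapsTo (Finset.image g) (s.powersetCard n) (t.powersetCard n) := by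
    intro X hX
    obtain ⟨hXs, hXcard⟩ := mem_powersetCard.mp hX
    exact mem_powersetCard.mpr ⟨Finset.image_subset_iff.mpr fun x hx => hg.mapsTo (hXs hx),
      (card_image_of_injOn (hg.injOn.mono hXs)).trans hXcard⟩
  have hinj : Set.InjOn (Finset.image g) (s.powersetCard n) := by
    intro X hX Y hY hXY
    rw [← Finset.coe_inj, ← hg.injOn.image_eq_image_iff
      (Finset.coe_subset.mpr (mem_powersetCard.mp hX).1)
      (Finset.coe_subset.mpr (mem_powersetCard.mp hY).1),
      ← Finset.coe_image, ← Finset.coe_image, hXY]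
  refine ⟨hmaps, hinj, surjOn_of_injOn_of_card_le _ hmaps hinj ?_⟩
  rw [card_powersetCard, card_powersetCard, card_nbij g hg.mapsTo hg.injOn hg.surjOn]

section

variable {α : Type*}

theorem exists_injOn_of_forall_exists_pin {S : Finset α} {P : Finset (Finset (Finset α))}
    (h : ∀ a ∈ S, ∃ X ∈ P, (⋂ A ∈ X, (A : Set α)) = {a}) :
    ∃ W : α → Finset (Finset α), Set.MapsTo W S P ∧ Set.InjOn W S ∧
      ∀ a ∈ S, (⋂ A ∈ W a, (A : Set α)) = {a} := by
  choose! W hW hpin using h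
  exact ⟨W, hW, fun a ha b hb hab =>
    Set.singleton_injective ((hpin a ha).symm.trans (hab ▸ hpin b hb)), hpin⟩

variable [DecidableEq α]

def incidence (𝒜 : Finset (Finset α)) (a : α) : Finset (Finset α) :=
  𝒜.filter (a ∈ ·)

theorem isHCSP_image_filter_mem {β : Type*} [DecidableEq β] {S : Finset α} {V : Finset β}
    {v : α → Finset β} (hv : Set.MapsTo v S (V.powersetCard 2)) (hinj : Set.InjOn v S) :
    IsHCSP S (V.image fun i => S.filter (i ∈ v ·)) := by
  intro a ha
  obtain ⟨hsub, hcard⟩ := mem_powersetCard.mp (hv ha)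
  obtain ⟨i, j, hij, hva⟩ := card_eq_two.mp hcard
  have hi : i ∈ V := hsub (by simp [hva])
  have hj : j ∈ V := hsub (by simp [hva])
  refine ⟨_, mem_image_of_mem _ hi, _, mem_image_of_mem _ hj, ?_⟩
  ext b
  simp only [mem_inter, mem_filter, mem_singleton]
  constructor
  · rintro ⟨⟨hb, hi⟩, -, hj⟩
    have hvb : v a ⊆ v b := by simp [hva, insert_subset_iff, hi, hj]
    exact hinj hb ha (eq_of_subset_of_card_le hvb
      (by rw [hcard, (mem_powersetCard.mp (hv hb)).2])).symm
  · rintro rfl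
    simp [ha, hva]

theorem exists_isHCSP_card_le (S : Finset α) (n : ℕ) (hS : S.card ≤ n.choose 2) :
    ∃ 𝒞 : Finset (Finset α), (∀ C ∈ 𝒞, C ⊆ S) ∧ IsHCSP S 𝒞 ∧ 𝒞.card ≤ n := by
  obtain ⟨v, hv, hinj⟩ := S.finite_toSet.exists_injOn_of_encard_le
    (t := ((range n).powersetCard 2 : Set (Finset ℕ))) (by simpa using hS)
  refine ⟨(range n).image fun i => S.filter (i ∈ v ·), ?_, isHCSP_image_filter_mem hv hinj,
    card_image_le.trans (card_range n).le⟩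
  simp

theorem IsHCSP.exists_pin_pair {S : Finset α} {𝒜 : Finset (Finset α)} (h : IsHCSP S 𝒜)
    {a : α} (ha : a ∈ S) (hsg : {a} ∉ 𝒜) :
    ∃ X ∈ (𝒜.filter (·.card ≠ 1)).powersetCard 2, (⋂ A ∈ X, (A : Set α)) = {a} := by
  obtain ⟨A, hA, B, hB, hAB⟩ := h a ha
  have hnsg : ∀ C ∈ 𝒜, a ∈ C → C.card ≠ 1 := by
    intro C hC haC hC1
    obtain ⟨c, rfl⟩ := card_eq_one.mp hC1
    rw [← mem_singleton.mp haC] at hC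
    exact hsg hC
  have haAB : a ∈ A ∧ a ∈ B := mem_inter.mp (hAB ▸ mem_singleton_self a)
  have hne : A ≠ B := by
    rintro rfl
    rw [inter_self] at hAB
    exact hsg (hAB ▸ hA)
  refine ⟨{A, B}, mem_powersetCard.mpr ⟨?_, card_pair hne⟩, ?_⟩
  · simp [insert_subset_iff, hA, hB, hnsg A hA haAB.1, hnsg B hB haAB.2]
  · simp [← coe_inter, hAB]

theorem IsHCSP.card_le {S : Finset α} {𝒜 : Finset (Finset α)} (h : IsHCSP S 𝒜) :
    S.card ≤ (𝒜.filter (·.card = 1)).card + ((𝒜.filter (·.card ≠ 1)).card).choose 2 := by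
  rw [← card_filter_add_card_filter_not (s := S) (fun a => {a} ∈ 𝒜)]
  gcongr
  · refine card_le_card_of_injOn (fun a => {a}) (fun a ha => ?_) singleton_injective.injOn
    simpa using (mem_filter.mp ha).2
  · obtain ⟨W, hW, hinj, -⟩ := exists_injOn_of_forall_exists_pin fun a ha =>
      h.exists_pin_pair (mem_filter.mp ha).1 (mem_filter.mp ha).2
    rw [← card_powersetCard]
    exact card_le_card_of_injOn W hW hinj

theorem bijOn_incidence_of_bijOn_pin {S : Finset α} {𝒜 : Finset (Finset α)}
    {W : α → Finset (Finset α)} (hW : Set.BijOn W S (𝒜.powersetCard 2))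
    (hpin : ∀ a ∈ S, (⋂ A ∈ W a, (A : Set α)) = {a}) :
    Set.BijOn (incidence 𝒜) S (𝒜.powersetCard 2) := by
  refine hW.congr fun a ha => ?_
  have hmem : ∀ b ∈ S, ∀ C ∈ W b, b ∈ C := fun b hb C hC =>
    Set.mem_iInter₂.mp ((hpin b hb).symm ▸ Set.mem_singleton b) C hC
  obtain ⟨hWsub, hWcard⟩ := mem_powersetCard.mp (hW.mapsTo ha)
  obtain ⟨A, B, -, hWa⟩ := card_eq_two.mp hWcard
  ext C
  simp only [incidence, mem_filter]
  refine ⟨fun hC => ⟨hWsub hC, hmem a ha C hC⟩, fun ⟨hC, haC⟩ => ?_⟩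
  -- otherwise `{C, A}` would be a second pair of members pinning `a`
  by_contra hCW
  have hA : A ∈ W a := by simp [hWa]
  have hCA : C ≠ A := fun h => hCW (h ▸ hA)
  obtain ⟨c, hc, hWc⟩ := hW.surjOn (mem_powersetCard.mpr
    ⟨insert_subset_iff.mpr ⟨hC, singleton_subset_iff.mpr (hWsub hA)⟩, card_pair hCA⟩)
  have hac : a ∈ (⋂ X ∈ W c, (X : Set α)) := by
    rw [hWc]
    simpa using ⟨haC, hmem a ha A hA⟩
  rw [hpin c hc, Set.mem_singleton_iff] at hac
  subst hac
  exact hCW (hWc ▸ mem_insert_self C {A})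

theorem IsHCSP.card_eq_and_bijOn_incidence {k : ℕ} (hk : 3 ≤ k) {S : Finset α}
    {𝒜 : Finset (Finset α)} (hS : S.card = (k + 1).choose 2) (h : IsHCSP S 𝒜)
    (hcard : 𝒜.card ≤ k + 1) :
    𝒜.card = k + 1 ∧ Set.BijOn (incidence 𝒜) S (𝒜.powersetCard 2) := by
  obtain ⟨hs, ht⟩ := eq_zero_and_eq_of_choose_two_le hk
    ((card_filter_add_card_filter_not _).trans_le hcard) (hS ▸ h.card_le)
  have hnsg : ∀ A ∈ 𝒜, ¬A.card = 1 := filter_eq_empty_iff.mp (card_eq_zero.mp hs)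
  rw [filter_true_of_mem hnsg] at ht
  obtain ⟨W, hWmaps, hWinj, hpin⟩ := exists_injOn_of_forall_exists_pin fun a ha =>
    filter_true_of_mem hnsg ▸ h.exists_pin_pair ha fun hA => hnsg _ hA (card_singleton a)
  refine ⟨ht, bijOn_incidence_of_bijOn_pin ⟨hWmaps, hWinj, ?_⟩ hpin⟩
  exact surjOn_of_injOn_of_card_le W hWmaps hWinj (by rw [card_powersetCard, ht, hS])

theorem image_eq_of_forall_mem_iff {S A : Finset α} {ψ : α → α} {B : Finset α} (hA : A ⊆ S)
    (hB : B ⊆ S) (hψ : Set.SurjOn ψ S S) (h : ∀ a ∈ S, ψ a ∈ B ↔ a ∈ A) : A.image ψ = B := by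
  ext y
  rw [mem_image]
  constructor
  · rintro ⟨a, ha, rfl⟩
    exact (h a (hA ha)).mpr ha
  · intro hy
    obtain ⟨a, ha, rfl⟩ := hψ (hB hy)
    exact ⟨a, (h a ha).mp hy, rfl⟩

theorem exists_perm_of_bijOn_incidence [Nonempty α] {S : Finset α} {𝒜 ℬ : Finset (Finset α)}
    (h𝒜sub : ∀ A ∈ 𝒜, A ⊆ S) (hℬsub : ∀ B ∈ ℬ, B ⊆ S) (hcard : 𝒜.card = ℬ.card)
    (h𝒜 : Set.BijOn (incidence 𝒜) S (𝒜.powersetCard 2))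
    (hℬ : Set.BijOn (incidence ℬ) S (ℬ.powersetCard 2)) :
    ∃ φ : α ≃ α, (∀ a ∈ S, φ a ∈ S) ∧ ℬ = 𝒜.image (Finset.image φ) := by
  obtain ⟨g, hg⟩ := (𝒜 : Set (Finset α)).toFinite.exists_bijOn_of_encard_eq
    (t := (ℬ : Set (Finset α))) (by simp [hcard])
  have hpairs := (hg.image_powersetCard 2).comp h𝒜
  set ψ := Function.invFunOn (incidence ℬ) S ∘ Finset.image g ∘ incidence 𝒜
  have hψ : Set.BijOn ψ S S := (hℬ.symm hℬ.invOn_invFunOn.symm).comp hpairs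
  have hincidence : ∀ a ∈ S, incidence ℬ (ψ a) = (incidence 𝒜 a).image g := fun a ha =>
    hℬ.invOn_invFunOn.2 (hpairs.mapsTo ha)
  have hψmem : ∀ a ∈ S, ∀ A ∈ 𝒜, ψ a ∈ g A ↔ a ∈ A := by
    intro a ha A hA
    have hgA : g A ∈ ℬ := hg.mapsTo hA
    calc ψ a ∈ g A ↔ g A ∈ incidence ℬ (ψ a) := by simp [incidence, hgA]
      _ ↔ g A ∈ (incidence 𝒜 a).image g := by
        rw [hincidence a ha]
      _ ↔ A ∈ incidence 𝒜 a := by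
        rw [← mem_coe, coe_image]
        exact hg.injOn.mem_image_iff (coe_subset.mpr (filter_subset _ _)) hA
      _ ↔ a ∈ A := by simp [incidence, hA]
  obtain ⟨σ, hσ⟩ := hψ.exists_perm_eqOn
  refine ⟨σ, fun a ha => hσ ha ▸ hψ.mapsTo ha, ?_⟩
  rw [image_congr fun A hA => image_eq_of_forall_mem_iff (h𝒜sub A hA) (hℬsub _ (hg.mapsTo hA))
    (hψ.surjOn.congr hσ.symm) fun a ha => hσ ha ▸ hψmem a ha A hA]
  exact coe_injective (by rw [coe_image, hg.image_eq])

end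

theorem stmt_19 {α : Type*} [DecidableEq α] (k : ℕ) (hk : 3 ≤ k)
    (S : Finset α) (hS : S.card = k * (k + 1) / 2)
    (𝒜 ℬ : Finset (Finset α))
    (h𝒜sub : ∀ A ∈ 𝒜, A ⊆ S) (hℬsub : ∀ B ∈ ℬ, B ⊆ S)
    (h𝒜 : ∀ a ∈ S, ∃ A ∈ 𝒜, ∃ B ∈ 𝒜, A ∩ B = {a})
    (hℬ : ∀ a ∈ S, ∃ A ∈ ℬ, ∃ B ∈ ℬ, A ∩ B = {a})
    (h𝒜min : ∀ 𝒞 : Finset (Finset α), (∀ C ∈ 𝒞, C ⊆ S) →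
        (∀ a ∈ S, ∃ A ∈ 𝒞, ∃ B ∈ 𝒞, A ∩ B = {a}) → 𝒜.card ≤ 𝒞.card)
    (hℬmin : ∀ 𝒞 : Finset (Finset α), (∀ C ∈ 𝒞, C ⊆ S) →
        (∀ a ∈ S, ∃ A ∈ 𝒞, ∃ B ∈ 𝒞, A ∩ B = {a}) → ℬ.card ≤ 𝒞.card) :
    ∃ φ : α ≃ α, (∀ a ∈ S, φ a ∈ S) ∧ ℬ = 𝒜.image (Finset.image φ) := by
  have hS' : S.card = (k + 1).choose 2 := by
    rw [hS, Nat.choose_two_right, Nat.add_sub_cancel, Nat.mul_comm]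
  obtain ⟨𝒞, h𝒞sub, h𝒞, h𝒞card⟩ := exists_isHCSP_card_le S (k + 1) hS'.le
  obtain ⟨h𝒜card, h𝒜inc⟩ := IsHCSP.card_eq_and_bijOn_incidence hk hS' h𝒜
    ((h𝒜min 𝒞 h𝒞sub h𝒞).trans h𝒞card)
  obtain ⟨hℬcard, hℬinc⟩ := IsHCSP.card_eq_and_bijOn_incidence hk hS' hℬ
    ((hℬmin 𝒞 h𝒞sub h𝒞).trans h𝒞card)
  obtain ⟨a, -⟩ := card_pos.mp (hS' ▸ Nat.choose_pos (by omega) : 0 < S.card)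
  have : Nonempty α := ⟨a⟩
  exact exists_perm_of_bijOn_incidence h𝒜sub hℬsub (h𝒜card.trans hℬcard.symm) h𝒜inc hℬinc
end
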